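/- arXiv:2002.08681 — 2 statements merged into one kernel-verified Lean document; each statement's English description precedes it below -/
import Mathlib

section
/- Fix ρ > 0 and K ≥ 2. For scoring vectors u, v ∈ ℝ^K with ∑_k u_k = 0 and ∑_k v_k = 0, let h(u) = argmax_k u_k (any maximizer) and let y ∈ {1,…,K}. Then 𝟙[h(u) ≠ y] ≤ L^ρ(v, y) + (1/K)·‖M^ρ(u) − M^ρ(v)‖_1, where L^ρ(v, y) = ∑_{k=1}^K Φ_ρ(μ_k(v, y)) and M^ρ is the matrix of absolute-margin violations M^ρ_{i,j}(w) = Φ_ρ(μ_i(w, j)). -/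
open MeasureTheory Finset

/-- The ramp loss with margin `ρ`. -/
noncomputable def ramp (ρ x : ℝ) : ℝ :=
  if ρ ≤ x then 0 else if x ≤ 0 then 1 else 1 - x / ρ

/-- The absolute margin function: `margin w y k = w k` if `k = y`, else `-w k`. -/
def margin {K : ℕ} (w : Fin K → ℝ) (y k : Fin K) : ℝ :=
  if k = y then w k else -w k

/-- Entrywise L1 distance between the matrices of absolute margin violations
`M^ρ(u)` and `M^ρ(v)`, where `M^ρ_{i,j}(w) = Φ_ρ(μ_i(w,j))`. -/
noncomputable def l1diff (ρ : ℝ) {K : ℕ} (u v : Fin K → ℝ) : ℝ :=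
  ∑ i : Fin K, ∑ j : Fin K, |ramp ρ (margin u j i) - ramp ρ (margin v j i)|

/-- The margin-based multi-class loss `L^ρ(w, y) = ∑_k Φ_ρ(μ_k(w,y))`. -/
noncomputable def Lmargin (ρ : ℝ) {K : ℕ} (w : Fin K → ℝ) (y : Fin K) : ℝ :=
  ∑ k : Fin K, ramp ρ (margin w y k)

/-!
Let `i` be the predicted class and `y ≠ i` the label. As the scores of `u` sum to zero, `u i ≥ 0`,
so row `i` of `M^ρ(u)` is `1` off the diagonal. Comparing rows `i` and `y` of `M^ρ(u)` and `M^ρ(v)`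
gives `K · L^ρ(v, y) + ‖M^ρ(u) - M^ρ(v)‖₁ ≥ (K - Φ_ρ(u_i)) + Φ_ρ(u_y) ≥ K`, the last step because
`u_y ≤ u_i` and `Φ_ρ` is antitone. Row `i` contributes `K - Φ_ρ(u_i)` through `Φ_ρ(x) + Φ_ρ(-x) ≥ 1`
at `x = v_i`.
-/

namespace Ramp

variable {ρ : ℝ}

theorem eq_max_min (hρ : 0 < ρ) (x : ℝ) : ramp ρ x = max 0 (min 1 (1 - x / ρ)) := by
  have h1 : 1 - x / ρ ≤ 0 ↔ ρ ≤ x := by rw [sub_nonpos, one_le_div hρ]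
  have h2 : 1 ≤ 1 - x / ρ ↔ x ≤ 0 := by rw [le_sub_self_iff, div_nonpos_iff]; grind
  unfold ramp
  split_ifs with hx hx' <;> grind

theorem nonneg (hρ : 0 < ρ) (x : ℝ) : 0 ≤ ramp ρ x := by
  rw [eq_max_min hρ]
  exact le_max_left _ _

theorem le_one (hρ : 0 < ρ) (x : ℝ) : ramp ρ x ≤ 1 := by
  rw [eq_max_min hρ]
  exact max_le zero_le_one (min_le_left _ _)

theorem antitone (hρ : 0 < ρ) : Antitone (ramp ρ) := fun x x' hxx' => by
  simp only [eq_max_min hρ]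
  gcongr

theorem of_nonpos (hρ : 0 < ρ) {x : ℝ} (hx : x ≤ 0) : ramp ρ x = 1 := by
  unfold ramp
  rw [if_neg (by linarith), if_pos hx]

theorem one_le_add_neg (hρ : 0 < ρ) (x : ℝ) : 1 ≤ ramp ρ x + ramp ρ (-x) := by
  rcases le_total x 0 with hx | hx
  · linarith [of_nonpos hρ hx, nonneg hρ (-x)]
  · linarith [of_nonpos hρ (neg_nonpos.mpr hx), nonneg hρ x]

end Ramp

section Margin

variable {K : ℕ} (w : Fin K → ℝ)

theorem margin_self (y : Fin K) : margin w y y = w y := if_pos rfl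

theorem margin_of_ne {y k : Fin K} (h : k ≠ y) : margin w y k = -w k := if_neg h

end Margin

theorem nonneg_of_sum_eq_zero_of_forall_le {ι : Type*} [Fintype ι] {u : ι → ℝ}
    (hu : ∑ k, u k = 0) {i : ι} (hi : ∀ k, u k ≤ u i) : 0 ≤ u i := by
  obtain ⟨k, -, hk⟩ :=
    exists_le_of_sum_le (f := 0) (g := u) ⟨i, mem_univ i⟩ (by simp [hu])
  exact hk.trans (hi k)

/-- The `L¹` distance between row `i` of `M^ρ(u)` and row `i` of `M^ρ(v)`. -/
noncomputable def rowDist (ρ : ℝ) {K : ℕ} (u v : Fin K → ℝ) (i : Fin K) : ℝ :=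
  ∑ j : Fin K, |ramp ρ (margin u j i) - ramp ρ (margin v j i)|

section Rows

variable {K : ℕ} {ρ : ℝ} {u v : Fin K → ℝ}

theorem rowDist_nonneg (i : Fin K) : 0 ≤ rowDist ρ u v i :=
  sum_nonneg fun _ _ => abs_nonneg _

theorem l1diff_eq_sum_rowDist : l1diff ρ u v = ∑ i, rowDist ρ u v i := rfl

theorem Lmargin_nonneg (hρ : 0 < ρ) (y : Fin K) : 0 ≤ Lmargin ρ v y :=
  sum_nonneg fun _ _ => Ramp.nonneg hρ _

/-- Off the diagonal, row `i` of `M^ρ(u)` is `Φ_ρ(-u_i) = 1`. -/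
theorem sub_ramp_le_mul_ramp_add_rowDist (hρ : 0 < ρ) {i y : Fin K} (hiy : i ≠ y)
    (hui : 0 ≤ u i) :
    K - ramp ρ (u i) ≤ K * ramp ρ (margin v y i) + rowDist ρ u v i := by
  set c := ramp ρ (-v i)
  have hoff : ∀ j ∈ univ.erase i,
      |ramp ρ (margin u j i) - ramp ρ (margin v j i)| = 1 - c := fun j hj => by
    have hij : i ≠ j := (ne_of_mem_erase hj).symm
    rw [margin_of_ne u hij, margin_of_ne v hij, Ramp.of_nonpos hρ (neg_nonpos.mpr hui),
      abs_of_nonneg (sub_nonneg.mpr (Ramp.le_one hρ _))]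
  have hrow : rowDist ρ u v i = |ramp ρ (u i) - ramp ρ (v i)| + (K - 1) * (1 - c) := by
    rw [rowDist, ← add_sum_erase _ _ (mem_univ i), margin_self, margin_self, sum_congr rfl hoff,
      sum_const, card_erase_of_mem (mem_univ i), card_univ, Fintype.card_fin, nsmul_eq_mul,
      Nat.cast_pred i.pos]
  rw [hrow, margin_of_ne v hiy]
  have hcount : (K : ℝ) * c + (K - 1) * (1 - c) = K - 1 + c := by ring
  linarith [neg_abs_le (ramp ρ (u i) - ramp ρ (v i)), Ramp.one_le_add_neg hρ (v i)]

theorem ramp_le_mul_ramp_add_rowDist (hρ : 0 < ρ) (y : Fin K) :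
    ramp ρ (u y) ≤ K * ramp ρ (margin v y y) + rowDist ρ u v y := by
  have hdiag : |ramp ρ (u y) - ramp ρ (v y)| ≤ rowDist ρ u v y := by
    simpa only [rowDist, margin_self] using
      single_le_sum (f := fun j => |ramp ρ (margin u j y) - ramp ρ (margin v j y)|)
        (fun _ _ => abs_nonneg _) (mem_univ y)
  have hK : ramp ρ (v y) ≤ K * ramp ρ (v y) :=
    le_mul_of_one_le_left (Ramp.nonneg hρ _) (by exact_mod_cast y.pos)
  rw [margin_self]
  linarith [le_abs_self (ramp ρ (u y) - ramp ρ (v y))]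

theorem natCast_le_mul_Lmargin_add_l1diff (hρ : 0 < ρ) (hu : ∑ k, u k = 0) {i y : Fin K}
    (hi : ∀ k, u k ≤ u i) (hiy : i ≠ y) : (K : ℝ) ≤ K * Lmargin ρ v y + l1diff ρ u v := by
  set F : Fin K → ℝ := fun k => K * ramp ρ (margin v y k) + rowDist ρ u v k
  have hF : K * Lmargin ρ v y + l1diff ρ u v = ∑ k, F k := by
    simp only [F, Lmargin, l1diff_eq_sum_rowDist, mul_sum, sum_add_distrib]
  calc (K : ℝ) ≤ (K - ramp ρ (u i)) + ramp ρ (u y) := by linarith [Ramp.antitone hρ (hi y)]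
    _ ≤ F i + F y := add_le_add
        (sub_ramp_le_mul_ramp_add_rowDist hρ hiy (nonneg_of_sum_eq_zero_of_forall_le hu hi))
        (ramp_le_mul_ramp_add_rowDist hρ y)
    _ = ∑ k ∈ {i, y}, F k := (sum_pair hiy).symm
    _ ≤ ∑ k, F k := sum_le_sum_of_subset_of_nonneg (subset_univ _) fun k _ _ =>
        add_nonneg (mul_nonneg K.cast_nonneg (Ramp.nonneg hρ _)) (rowDist_nonneg k)
    _ = _ := hF.symm

end Rows

theorem indicator_le_loss_add_mcsd_general {K : ℕ} (ρ : ℝ) (hρ : 0 < ρ)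
    (u v : Fin K → ℝ) (hu : ∑ k : Fin K, u k = 0)
    (iu : Fin K) (hiu : ∀ k : Fin K, u k ≤ u iu) (y : Fin K) :
    (if iu ≠ y then (1 : ℝ) else 0) ≤
      Lmargin ρ v y + (1 / (K : ℝ)) * l1diff ρ u v := by
  have hD : 0 ≤ l1diff ρ u v := sum_nonneg fun i _ => rowDist_nonneg i
  have hK : (0 : ℝ) < K := by exact_mod_cast y.pos
  split_ifs with hiy
  · calc (1 : ℝ) ≤ (K * Lmargin ρ v y + l1diff ρ u v) / K :=
          (one_le_div hK).mpr (natCast_le_mul_Lmargin_add_l1diff hρ hu hiu hiy)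
      _ = Lmargin ρ v y + 1 / K * l1diff ρ u v := by field_simp
  · have := Lmargin_nonneg hρ (v := v) y
    positivity

theorem indicator_le_loss_add_mcsd {K : ℕ} (hK : 2 ≤ K) (ρ : ℝ) (hρ : 0 < ρ)
    (u v : Fin K → ℝ) (hu : ∑ k : Fin K, u k = 0) (hv : ∑ k : Fin K, v k = 0)
    (iu : Fin K) (hiu : ∀ k : Fin K, u k ≤ u iu) (y : Fin K) :
    (if iu ≠ y then (1 : ℝ) else 0) ≤
      Lmargin ρ v y + (1 / (K : ℝ)) * l1diff ρ u v :=
  indicator_le_loss_add_mcsd_general ρ hρ u v hu iu hiu y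
end

section
/- (Lemma A.1) Fix ρ > 0. For any scoring functions f, f' ∈ F (with values in ℝ^K summing to zero) and any distribution D over X × Y, E_D(h_f) ≤ E^ρ_D(f') + MCSD^ρ_{D_x}(f, f'), where E_D(h_f) = E_{(x,y)∼D} 𝟙[h_f(x) ≠ y] with h_f(x) = argmax_k f_k(x), E^ρ_D(f') = E_{(x,y)∼D} ∑_{k=1}^K Φ_ρ(μ_k(f'(x), y)), and MCSD^ρ_{D_x}(f, f') = (1/K)·E_{x∼D_x} ‖M^ρ(f(x)) − M^ρ(f'(x))‖_1. -/
open MeasureTheory Finset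

lemma ramp_nonneg {ρ : ℝ} (hρ : 0 < ρ) (x : ℝ) : 0 ≤ ramp ρ x := by
  unfold ramp
  split_ifs with h1 h2
  · exact le_refl 0
  · norm_num
  · push_neg at h1 h2
    have : x / ρ ≤ 1 := by rw [div_le_one hρ]; linarith
    linarith

lemma ramp_le_one {ρ : ℝ} (hρ : 0 < ρ) (x : ℝ) : ramp ρ x ≤ 1 := by
  unfold ramp
  split_ifs with h1 h2
  · norm_num
  · norm_num
  · push_neg at h1 h2
    have : 0 ≤ x / ρ := div_nonneg h2.le hρ.le
    linarith

lemma ramp_eq_one {ρ : ℝ} (hρ : 0 < ρ) {x : ℝ} (hx : x ≤ 0) : ramp ρ x = 1 := by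
  unfold ramp
  rw [if_neg (by linarith), if_pos hx]

lemma ramp_anti {ρ : ℝ} (hρ : 0 < ρ) {x y : ℝ} (h : x ≤ y) : ramp ρ y ≤ ramp ρ x := by
  rcases le_or_gt ρ y with hy | hy
  · rw [show ramp ρ y = 0 from by unfold ramp; rw [if_pos hy]]
    exact ramp_nonneg hρ x
  rcases le_or_gt y 0 with hy0 | hy0
  · rw [ramp_eq_one hρ hy0, ramp_eq_one hρ (h.trans hy0)]
  · have hry : ramp ρ y = 1 - y / ρ := by
      unfold ramp; rw [if_neg (not_le.2 hy), if_neg (not_le.2 hy0)]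
    rw [hry]
    rcases le_or_gt x 0 with hx0 | hx0
    · rw [ramp_eq_one hρ hx0]
      have : 0 ≤ y / ρ := by positivity
      linarith
    · have hrx : ramp ρ x = 1 - x / ρ := by
        unfold ramp; rw [if_neg (not_le.2 (lt_of_le_of_lt h hy)), if_neg (not_le.2 hx0)]
      rw [hrx]
      have : x / ρ ≤ y / ρ := by gcongr
      linarith

lemma ramp_add_ramp_neg {ρ : ℝ} (hρ : 0 < ρ) (x : ℝ) : 1 ≤ ramp ρ x + ramp ρ (-x) := by
  rcases le_or_gt x 0 with h | h
  · rw [ramp_eq_one hρ h]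
    have := ramp_nonneg hρ (-x); linarith
  · rw [ramp_eq_one hρ (by linarith : -x ≤ 0)]
    have := ramp_nonneg hρ x; linarith

lemma key_pointwise {K : ℕ} (hK : 2 ≤ K) {ρ : ℝ} (hρ : 0 < ρ)
    (u v : Fin K → ℝ) (husum : ∑ k : Fin K, u k = 0)
    (c y : Fin K) (hcy : c ≠ y) (hmaxu : ∀ k, u k ≤ u c) :
    1 ≤ Lmargin ρ v y + (1 / (K : ℝ)) * l1diff ρ u v := by
  have hKpos : (0 : ℝ) < K := by positivity
  have hK2 : (2 : ℝ) ≤ K := by exact_mod_cast hK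
  -- u c ≥ 0
  have hucnn : 0 ≤ u c := by
    by_contra hneg
    push_neg at hneg
    have : ∑ k : Fin K, u k < ∑ k : Fin K, (0 : ℝ) := by
      apply Finset.sum_lt_sum_of_nonempty
      · exact Finset.univ_nonempty_iff.2 ⟨c⟩
      · intro k _; exact lt_of_le_of_lt (hmaxu k) hneg
    simp [husum] at this
  set t := ramp ρ (v y) with ht
  set s := ramp ρ (-v c) with hs
  set A := ramp ρ (u y) with hA
  set B := ramp ρ (u c) with hB
  set Cv := ramp ρ (v c) with hCv
  -- Lmargin lower bound: t + s
  have hL : t + s ≤ Lmargin ρ v y := by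
    have : ({y, c} : Finset (Fin K)).sum (fun k => ramp ρ (margin v y k)) ≤
        Lmargin ρ v y := by
      apply Finset.sum_le_sum_of_subset_of_nonneg (Finset.subset_univ _)
      intro k _ _; exact ramp_nonneg hρ _
    rw [Finset.sum_pair (Ne.symm hcy)] at this
    simpa [margin, hcy, Ne.symm hcy] using this
  -- l1diff lower bound
  set e : Fin K → Fin K → ℝ :=
    fun i j => |ramp ρ (margin u j i) - ramp ρ (margin v j i)| with he
  have hennneg : ∀ i j, 0 ≤ e i j := fun i j => abs_nonneg _
  have hrow : ∀ i, 0 ≤ ∑ j, e i j := fun i => Finset.sum_nonneg fun j _ => hennneg i j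
  have hl1 : (∑ j, e c j) + e y y ≤ l1diff ρ u v := by
    have hsub : ({c, y} : Finset (Fin K)).sum (fun i => ∑ j, e i j) ≤
        ∑ i, ∑ j, e i j :=
      Finset.sum_le_sum_of_subset_of_nonneg (Finset.subset_univ _)
        (fun i _ _ => hrow i)
    rw [Finset.sum_pair hcy] at hsub
    have hyy : e y y ≤ ∑ j, e y j :=
      Finset.single_le_sum (fun j _ => hennneg y j) (Finset.mem_univ y)
    calc (∑ j, e c j) + e y y ≤ (∑ j, e c j) + ∑ j, e y j := by linarith
    _ ≤ ∑ i, ∑ j, e i j := hsub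
    _ = l1diff ρ u v := rfl
  -- row c: e c c + (K-1)*(1-s)
  have hrowc : e c c + ((K : ℝ) - 1) * (1 - s) ≤ ∑ j, e c j := by
    have hsplit : ∑ j, e c j = e c c + ∑ j ∈ Finset.univ.erase c, e c j :=
      (Finset.add_sum_erase _ _ (Finset.mem_univ c)).symm
    have hoff : ∀ j ∈ Finset.univ.erase c, e c j = 1 - s := by
      intro j hj
      have hjc : j ≠ c := (Finset.mem_erase.1 hj).1
      have hmu : margin u j c = -u c := by simp [margin, hjc.symm]
      have hmv : margin v j c = -v c := by simp [margin, hjc.symm]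
      have hru : ramp ρ (margin u j c) = 1 := by
        rw [hmu]; exact ramp_eq_one hρ (by linarith)
      have hslee : s ≤ 1 := ramp_le_one hρ _
      rw [he]; simp only
      rw [hru, hmv, ← hs, abs_of_nonneg (by linarith)]
    rw [hsplit, Finset.sum_congr rfl hoff, Finset.sum_const]
    have hcard : (Finset.univ.erase c).card = K - 1 := by
      rw [Finset.card_erase_of_mem (Finset.mem_univ c), Finset.card_univ, Fintype.card_fin]
    rw [hcard, nsmul_eq_mul]
    have : ((K - 1 : ℕ) : ℝ) = (K : ℝ) - 1 := by
      have : 1 ≤ K := by omega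
      push_cast [this]; ring
    rw [this]
  -- e c c ≥ Cv - B, e y y ≥ A - t
  have hecc : Cv - B ≤ e c c := by
    have : margin u c c = u c := by simp [margin]
    have h2' : margin v c c = v c := by simp [margin]
    calc Cv - B ≤ |B - Cv| := by
          rw [abs_sub_comm]; exact le_abs_self _
    _ = e c c := by rw [he]; simp only [this, h2', hB, hCv]
  have heyy : A - t ≤ e y y := by
    have h1' : margin u y y = u y := by simp [margin]
    have h2' : margin v y y = v y := by simp [margin]
    calc A - t ≤ |A - t| := le_abs_self _
    _ = e y y := by rw [he]; simp only [h1', h2', hA, ht]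
  -- key scalar facts
  have hAB : B ≤ A := ramp_anti hρ (hmaxu y)
  have hsC : 1 ≤ Cv + s := by
    have := ramp_add_ramp_neg hρ (v c); rw [← hCv, ← hs] at this; linarith
  have htnn : 0 ≤ t := ramp_nonneg hρ _
  have hsle : s ≤ 1 := ramp_le_one hρ _
  -- assemble
  have hD : (A - t) + (Cv - B) + ((K : ℝ) - 1) * (1 - s) ≤ l1diff ρ u v := by
    have := hl1
    nlinarith [hrowc, hecc, heyy]
  rw [← sub_nonneg]
  have hfrac : ((A - t) + (Cv - B) + ((K : ℝ) - 1) * (1 - s)) / K ≤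
      (1 / (K : ℝ)) * l1diff ρ u v := by
    rw [div_le_iff₀ hKpos, one_div, mul_comm ((K : ℝ)⁻¹) _, mul_assoc,
      inv_mul_cancel₀ (ne_of_gt hKpos), mul_one]
    exact hD
  have hY : (K : ℝ) * (1 - (t + s)) ≤ (A - t) + (Cv - B) + ((K : ℝ) - 1) * (1 - s) := by
    nlinarith [mul_nonneg (by linarith : (0:ℝ) ≤ (K:ℝ) - 1) htnn]
  have hmain : 1 ≤ (t + s) + ((A - t) + (Cv - B) + ((K : ℝ) - 1) * (1 - s)) / K := by
    have h2' : 1 - (t + s) ≤ ((A - t) + (Cv - B) + ((K : ℝ) - 1) * (1 - s)) / K := by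
      rw [le_div_iff₀ hKpos]
      linarith [hY]
    linarith
  linarith [hL, hfrac, hmain]

theorem lemmaA1 {X : Type*} [MeasurableSpace X] {K : ℕ} (hK : 2 ≤ K)
    (ρ : ℝ) (hρ : 0 < ρ)
    (D : Measure (X × Fin K)) (hD : IsProbabilityMeasure D)
    (f f' : X → Fin K → ℝ)
    (hfsum : ∀ x, ∑ k : Fin K, f x k = 0) (hf'sum : ∀ x, ∑ k : Fin K, f' x k = 0)
    (hf : X → Fin K) (hmax : ∀ x k, f x k ≤ f x (hf x))
    (h1 : Integrable (fun p : X × Fin K => if hf p.1 ≠ p.2 then (1 : ℝ) else 0) D)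
    (h2 : Integrable (fun p : X × Fin K => Lmargin ρ (f' p.1) p.2) D)
    (h3 : Integrable (fun p : X × Fin K => l1diff ρ (f p.1) (f' p.1)) D) :
    (∫ p, (if hf p.1 ≠ p.2 then (1 : ℝ) else 0) ∂D) ≤
      (∫ p, Lmargin ρ (f' p.1) p.2 ∂D) +
        (1 / (K : ℝ)) * ∫ p, l1diff ρ (f p.1) (f' p.1) ∂D := by
  have hKpos : (0 : ℝ) < K := by positivity
  have hpt : ∀ p : X × Fin K,
      (if hf p.1 ≠ p.2 then (1 : ℝ) else 0) ≤
        Lmargin ρ (f' p.1) p.2 + (1 / (K : ℝ)) * l1diff ρ (f p.1) (f' p.1) := by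
    intro p
    by_cases h : hf p.1 ≠ p.2
    · rw [if_pos h]
      exact key_pointwise hK hρ (f p.1) (f' p.1) (hfsum p.1) (hf p.1) p.2 h (hmax p.1)
    · rw [if_neg h]
      have hLnn : 0 ≤ Lmargin ρ (f' p.1) p.2 :=
        Finset.sum_nonneg fun k _ => ramp_nonneg hρ _
      have hlnn : 0 ≤ l1diff ρ (f p.1) (f' p.1) :=
        Finset.sum_nonneg fun i _ => Finset.sum_nonneg fun j _ => abs_nonneg _
      positivity
  have hint : Integrable (fun p : X × Fin K =>
      Lmargin ρ (f' p.1) p.2 + (1 / (K : ℝ)) * l1diff ρ (f p.1) (f' p.1)) D :=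
    h2.add (h3.const_mul _)
  calc (∫ p, (if hf p.1 ≠ p.2 then (1 : ℝ) else 0) ∂D)
      ≤ ∫ p, (Lmargin ρ (f' p.1) p.2 + (1 / (K : ℝ)) * l1diff ρ (f p.1) (f' p.1)) ∂D :=
        integral_mono h1 hint hpt
    _ = (∫ p, Lmargin ρ (f' p.1) p.2 ∂D) +
        (1 / (K : ℝ)) * ∫ p, l1diff ρ (f p.1) (f' p.1) ∂D := by
        rw [integral_add h2 (h3.const_mul _), integral_const_mul]
end
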